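/- arXiv:2307.08455 — 4 statements merged into one kernel-verified Lean document; each statement's English description precedes it below -/
import Mathlib

section
/- Let F = ℚ(x₁, x₂, x₃) and set x₁' := (x₂ + x₃)/x₁. Then the intersection of the two subrings ℤ[x₁^{±1}, x₂^{±1}, x₃^{±1}] and ℤ[(x₁')^{±1}, x₂^{±1}, x₃^{±1}] of F is equal to the subring ℤ[x₁, x₁', x₂^{±1}, x₃^{±1}] generated by x₁, x₁' and the inverted frozen variables x₂^{±1}, x₃^{±1}. (In other words, for the SL₃ seed the upper cluster algebra 𝒰 equals the localized cluster algebra 𝒜.) -/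
/- The SL₃ example: F = ℚ(x₁, x₂, x₃), x₁' = (x₂ + x₃)/x₁.
   The upper cluster algebra (intersection of the two Laurent polynomial rings
   ℤ[x₁^{±1}, x₂^{±1}, x₃^{±1}] and ℤ[(x₁')^{±1}, x₂^{±1}, x₃^{±1}]) equals the
   localized cluster algebra ℤ[x₁, x₁', x₂^{±1}, x₃^{±1}]. -/

noncomputable section

/-- The ambient field `F = ℚ(x₁, x₂, x₃)`. -/
abbrev F : Type := FractionRing (MvPolynomial (Fin 3) ℚ)

/-- The three variables `x₁, x₂, x₃` (indexed by `0, 1, 2`) inside `F`. -/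
def x (i : Fin 3) : F := algebraMap (MvPolynomial (Fin 3) ℚ) F (MvPolynomial.X i)

/-- The mutated cluster variable `x₁' = (x₂ + x₃)/x₁`. -/
def x₁' : F := (x 1 + x 2) / x 0

namespace SL3Aux

open MvPolynomial

abbrev S : Type := MvPolynomial (Fin 2) ℤ

/-- evaluation of frozen variables -/
def ψ : S →+* F := MvPolynomial.eval₂Hom (Int.castRingHom F) (fun i => x i.succ)

def Φ (t : F) : Polynomial S →+* F := Polynomial.eval₂RingHom ψ t

def mS : S := X 0 + X 1

lemma ψ_C (a : ℤ) : ψ (C a) = (a : F) := by simp [ψ]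

lemma ψ_X0 : ψ (X 0) = x 1 := by
  show ψ (X 0) = x ((0 : Fin 2).succ)
  · simp [ψ]
  

lemma ψ_X1 : ψ (X 1) = x 2 := by
  show ψ (X 1) = x ((1 : Fin 2).succ)
  · simp [ψ]

lemma Φ_C (t : F) (s : S) : Φ t (Polynomial.C s) = ψ s := Polynomial.eval₂_C _ _

lemma Φ_X (t : F) : Φ t Polynomial.X = t := Polynomial.eval₂_X _ _

/-- the ℤ-coefficients polynomial ring mapping onto the cluster monomials -/
def ι : MvPolynomial (Fin 3) ℤ →+* F :=
  (algebraMap (MvPolynomial (Fin 3) ℚ) F).comp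
    (MvPolynomial.map (Int.castRingHom ℚ) : MvPolynomial (Fin 3) ℤ →+* MvPolynomial (Fin 3) ℚ)

lemma ι_inj : Function.Injective ι := by
  refine (IsFractionRing.injective (MvPolynomial (Fin 3) ℚ) F).comp ?_
  exact MvPolynomial.map_injective _ Int.cast_injective

lemma ι_X (i : Fin 3) : ι (X i) = x i := by
  simp [ι, x]

end SL3Aux

namespace SL3Aux
open MvPolynomial

lemma Φ_finSuccEquiv (p : MvPolynomial (Fin 3) ℤ) :
    Φ (x 0) (finSuccEquiv ℤ 2 p) = ι p := by
  have h : (Φ (x 0)).comp ((finSuccEquiv ℤ 2).toAlgHom.toRingHom) = ι := by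
    apply MvPolynomial.ringHom_ext
    · intro r
      simp [Φ_C, ψ_C, ι]
    · intro i
      refine Fin.cases ?_ ?_ i
      · simp [finSuccEquiv_X_zero, Φ_X, ι_X]
      · intro j
        have : (finSuccEquiv ℤ 2) (X j.succ) = Polynomial.C (X j) := finSuccEquiv_X_succ
        simp only [AlgHom.toRingHom_eq_coe, RingHom.coe_comp, RingHom.coe_coe,
          AlgHom.coe_coe, AlgEquiv.coe_algHom, Function.comp_apply, this, Φ_C, ι_X]
        rw [ι_X]
        simp [ψ]
  have := congrArg (fun f => f p) h
  simpa using this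

lemma Φ_inj : Function.Injective (Φ (x 0)) := by
  intro u v huv
  have h1 : ι ((finSuccEquiv ℤ 2).symm u) = ι ((finSuccEquiv ℤ 2).symm v) := by
    rw [← Φ_finSuccEquiv, ← Φ_finSuccEquiv]
    simp [huv]
  have := ι_inj h1
  exact (finSuccEquiv ℤ 2).symm.injective this

lemma x_ne_zero (i : Fin 3) : x i ≠ 0 := by
  rw [← ι_X]
  intro h
  exact MvPolynomial.X_ne_zero i (ι_inj (h.trans (map_zero ι).symm))

end SL3Aux

namespace SL3Aux
open MvPolynomial

lemma ψ_mS : ψ mS = x 1 + x 2 := by rw [mS, map_add, ψ_X0, ψ_X1]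

lemma mS_prime : Prime mS := by
  have h1 : (finSuccEquiv ℤ 1) mS = Polynomial.X + Polynomial.C (X 0) := by
    have hs : (finSuccEquiv ℤ 1) (X (0 : Fin 1).succ) = Polynomial.C (X 0) := finSuccEquiv_X_succ
    rw [mS, map_add, finSuccEquiv_X_zero, show ((1:Fin 2)) = (0:Fin 1).succ from rfl, hs]
  have hp : Prime ((finSuccEquiv ℤ 1) mS) := by
    rw [h1]
    have := Polynomial.prime_X_sub_C (-(X 0 : MvPolynomial (Fin 1) ℤ))
    rwa [map_neg, sub_neg_eq_add] at this
  exact (MulEquiv.prime_iff (finSuccEquiv ℤ 1)).mp hp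

lemma mS_ne_zero : mS ≠ 0 := mS_prime.ne_zero

lemma mS_not_dvd_X (i : Fin 2) : ¬ mS ∣ X i := by
  intro ⟨t, ht⟩
  have := congrArg (MvPolynomial.eval (fun j : Fin 2 => if j = 0 then (1 : ℤ) else -1)) ht
  simp [mS] at this
  fin_cases i <;> simp_all

lemma mS_not_dvd_mono (e g : ℕ) : ¬ mS ∣ (X 0 : S) ^ e * X 1 ^ g := by
  intro h
  rcases mS_prime.dvd_mul.mp h with h' | h' <;>
    exact mS_not_dvd_X _ (mS_prime.dvd_of_dvd_pow h')

end SL3Aux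

namespace SL3Aux
open MvPolynomial Polynomial

/-- twist: the polynomial `X^D q(m/X)` -/
def tw (q : Polynomial S) (D : ℕ) : Polynomial S :=
  q.sum fun k a => Polynomial.C (a * mS ^ k) * Polynomial.X ^ (D - k)

lemma tw_coeff (q : Polynomial S) (D i : ℕ) (hD : q.natDegree ≤ D) (hi : i ≤ D) :
    (tw q D).coeff i = q.coeff (D - i) * mS ^ (D - i) := by
  rw [tw, Polynomial.sum_def, Polynomial.finset_sum_coeff]
  have : ∀ k ∈ q.support, (Polynomial.C (q.coeff k * mS ^ k) * Polynomial.X ^ (D - k)).coeff i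
      = if k = D - i then q.coeff (D - i) * mS ^ (D - i) else 0 := by
    intro k hk
    have hkD : k ≤ D := le_trans (Polynomial.le_natDegree_of_mem_supp k hk) hD
    rw [Polynomial.coeff_C_mul, Polynomial.coeff_X_pow]
    by_cases h : k = D - i
    · subst h
      rw [if_pos rfl, if_pos (by omega), mul_one]
    · rw [if_neg h, if_neg (by omega), mul_zero]
  rw [Finset.sum_congr rfl this, Finset.sum_ite_eq' q.support (D - i)
    (fun _ => q.coeff (D - i) * mS ^ (D - i))]
  by_cases h : D - i ∈ q.support
  · rw [if_pos h]
  · rw [if_neg h]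
    have : q.coeff (D - i) = 0 := Polynomial.notMem_support_iff.mp h
    rw [this, zero_mul]

end SL3Aux

namespace SL3Aux
open MvPolynomial Polynomial

lemma x₁'_mul_x0 : x₁' * x 0 = x 1 + x 2 := div_mul_cancel₀ _ (x_ne_zero 0)

lemma x₁'_ne_zero : x₁' ≠ 0 := by
  intro h
  have h2 : x 1 + x 2 = 0 := by rw [← x₁'_mul_x0, h, zero_mul]
  have : ψ mS = 0 := by rw [ψ_mS, h2]
  rw [show (0 : F) = ψ 0 from (map_zero ψ).symm] at this
  have hψ : Function.Injective ψ := by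
    intro u v huv
    have : Φ (x 0) (Polynomial.C u) = Φ (x 0) (Polynomial.C v) := by
      rw [Φ_C, Φ_C, huv]
    exact Polynomial.C_injective (Φ_inj this)
  exact mS_ne_zero (hψ this)

lemma Φ'_tw (q : Polynomial S) (D : ℕ) (hD : q.natDegree ≤ D) :
    Φ x₁' q * x 0 ^ D = Φ (x 0) (tw q D) := by
  have hΦ' : Φ x₁' q = ∑ k ∈ q.support, ψ (q.coeff k) * x₁' ^ k := by
    rw [show Φ x₁' q = Polynomial.eval₂ ψ x₁' q from rfl, Polynomial.eval₂_eq_sum,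
      Polynomial.sum_def]
  rw [hΦ', tw, Polynomial.sum_def, map_sum, Finset.sum_mul]
  refine Finset.sum_congr rfl fun k hk => ?_
  have hkD : k ≤ D := le_trans (Polynomial.le_natDegree_of_mem_supp k hk) hD
  rw [map_mul, map_pow, Φ_C, Φ_X, map_mul, map_pow, ψ_mS]
  have hsplit : x 0 ^ D = x 0 ^ k * x 0 ^ (D - k) := by
    rw [← pow_add]
    congr 1
    omega
  rw [hsplit]
  calc ψ (q.coeff k) * x₁' ^ k * (x 0 ^ k * x 0 ^ (D - k))
      = ψ (q.coeff k) * ((x₁' * x 0) ^ k * x 0 ^ (D - k)) := by ring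
    _ = ψ (q.coeff k) * ((x 1 + x 2) ^ k * x 0 ^ (D - k)) := by rw [x₁'_mul_x0]
    _ = ψ (q.coeff k) * (x 1 + x 2) ^ k * x 0 ^ (D - k) := by ring

end SL3Aux

namespace SL3Aux
open MvPolynomial Polynomial
set_option synthInstance.maxHeartbeats 1000000

lemma ψ_mem (T : Subring F) (h1 : x 1 ∈ T) (h2 : x 2 ∈ T) (s : S) : ψ s ∈ T := by
  induction s using MvPolynomial.induction_on with
  | C a => rw [ψ_C]; exact intCast_mem T a
  | add p q hp hq => rw [map_add]; exact add_mem hp hq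
  | mul_X p i hp =>
      rw [map_mul]
      refine mul_mem hp ?_
      have : ψ (X i) = x i.succ := by simp [ψ]
      rw [this]
      fin_cases i
      · exact h1
      · exact h2

lemma rep_of_mem (t : F) (ht : t ≠ 0) {y : F}
    (hy : y ∈ Subring.closure {t, t⁻¹, x 1, (x 1)⁻¹, x 2, (x 2)⁻¹}) :
    ∃ (p : Polynomial S) (a b c : ℕ), t ^ a * x 1 ^ b * x 2 ^ c * y = Φ t p := by
  induction hy using Subring.closure_induction with
  | mem z hz =>
      simp only [Set.mem_insert_iff, Set.mem_singleton_iff] at hz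
      rcases hz with rfl | rfl | rfl | rfl | rfl | rfl
      · exact ⟨Polynomial.X, 0, 0, 0, by simp [Φ_X]⟩
      · exact ⟨1, 1, 0, 0, by simp [mul_inv_cancel₀ ht]⟩
      · exact ⟨Polynomial.C (X 0), 0, 0, 0, by simp [Φ_C, ψ_X0]⟩
      · exact ⟨1, 0, 1, 0, by simp [mul_inv_cancel₀ (x_ne_zero 1)]⟩
      · exact ⟨Polynomial.C (X 1), 0, 0, 0, by simp [Φ_C, ψ_X1]⟩
      · exact ⟨1, 0, 0, 1, by simp [mul_inv_cancel₀ (x_ne_zero 2)]⟩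
  | zero => exact ⟨0, 0, 0, 0, by simp⟩
  | one => exact ⟨1, 0, 0, 0, by simp⟩
  | add z w hz hw ihz ihw =>
      obtain ⟨p1, a1, b1, c1, h1⟩ := ihz
      obtain ⟨p2, a2, b2, c2, h2⟩ := ihw
      refine ⟨Polynomial.X ^ a2 * Polynomial.C (X 0 ^ b2 * X 1 ^ c2) * p1
        + Polynomial.X ^ a1 * Polynomial.C (X 0 ^ b1 * X 1 ^ c1) * p2,
        a1 + a2, b1 + b2, c1 + c2, ?_⟩
      simp only [map_add, map_mul, map_pow, Φ_X, Φ_C, ψ_X0, ψ_X1]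
      rw [← h1, ← h2]
      ring
  | neg z hz ihz =>
      obtain ⟨p, a, b, c, h⟩ := ihz
      exact ⟨-p, a, b, c, by rw [map_neg, ← h]; ring⟩
  | mul z w hz hw ihz ihw =>
      obtain ⟨p1, a1, b1, c1, h1⟩ := ihz
      obtain ⟨p2, a2, b2, c2, h2⟩ := ihw
      refine ⟨p1 * p2, a1 + a2, b1 + b2, c1 + c2, ?_⟩
      rw [map_mul, ← h1, ← h2]
      ring

end SL3Aux

namespace SL3Aux
open MvPolynomial Polynomial
set_option synthInstance.maxHeartbeats 1000000

lemma key_dvd {p q : Polynomial S} {a b c d e g : ℕ} {D : ℕ} (hD : q.natDegree ≤ D)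
    (hpq : p * Polynomial.C (mS ^ d * X 0 ^ e * X 1 ^ g) * Polynomial.X ^ D
      = tw q D * Polynomial.C (X 0 ^ b * X 1 ^ c) * Polynomial.X ^ (a + d))
    {j : ℕ} (hj : j < a) : mS ^ (a - j) ∣ p.coeff j := by
  have h := congrArg (fun r => Polynomial.coeff r (j + D)) hpq
  simp only [Polynomial.coeff_mul_X_pow, Polynomial.coeff_mul_X_pow',
    Polynomial.coeff_mul_C] at h
  rw [if_pos (Nat.le_add_left D j), Nat.add_sub_cancel] at h
  by_cases hle : a + d ≤ j + D
  · rw [if_pos hle, tw_coeff q D _ hD (by omega),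
      show D - (j + D - (a + d)) = (a - j) + d by omega] at h
    have h2 : mS ^ d * (p.coeff j * (X 0 ^ e * X 1 ^ g))
        = mS ^ d * (q.coeff ((a - j) + d) * mS ^ (a - j) * (X 0 ^ b * X 1 ^ c)) := by
      rw [pow_add] at h
      linear_combination h
    have h3 := mul_left_cancel₀ (pow_ne_zero d mS_ne_zero) h2
    have hdvd : mS ^ (a - j) ∣ p.coeff j * (X 0 ^ e * X 1 ^ g) :=
      ⟨q.coeff ((a - j) + d) * (X 0 ^ b * X 1 ^ c), by rw [h3]; ring⟩
    exact mS_prime.pow_dvd_of_dvd_mul_right _ (mS_not_dvd_mono e g) hdvd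
  · rw [if_neg hle] at h
    rcases mul_eq_zero.mp h with h' | h'
    · rw [h']
      exact dvd_zero _
    · exact absurd h' (mul_ne_zero (mul_ne_zero (pow_ne_zero _ mS_ne_zero)
        (pow_ne_zero _ (MvPolynomial.X_ne_zero _))) (pow_ne_zero _ (MvPolynomial.X_ne_zero _)))

end SL3Aux


open SL3Aux MvPolynomial

theorem upper_cluster_algebra_eq_localized_cluster_algebra :
    Subring.closure {x 0, (x 0)⁻¹, x 1, (x 1)⁻¹, x 2, (x 2)⁻¹} ⊓
      Subring.closure {x₁', x₁'⁻¹, x 1, (x 1)⁻¹, x 2, (x 2)⁻¹} =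
    Subring.closure {x 0, x₁', x 1, (x 1)⁻¹, x 2, (x 2)⁻¹} := by
  apply le_antisymm
  · -- hard direction
    intro y hy
    rw [Subring.mem_inf] at hy
    obtain ⟨p, a, b, c, h1⟩ := rep_of_mem (x 0) (x_ne_zero 0) hy.1
    obtain ⟨q, d, e, g, h2⟩ := rep_of_mem x₁' x₁'_ne_zero hy.2
    set D := q.natDegree with hDdef
    have hcross : Φ (x 0) p * (x₁' ^ d * x 1 ^ e * x 2 ^ g)
        = Φ x₁' q * (x 0 ^ a * x 1 ^ b * x 2 ^ c) := by
      rw [← h1, ← h2]; ring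
    have hFpoly : Φ (x 0) (p * Polynomial.C (mS ^ d * X 0 ^ e * X 1 ^ g) * Polynomial.X ^ D)
        = Φ (x 0) (tw q D * Polynomial.C (X 0 ^ b * X 1 ^ c) * Polynomial.X ^ (a + d)) := by
      simp only [map_mul, map_pow, Φ_C, Φ_X, ψ_mS, ψ_X0, ψ_X1]
      rw [← Φ'_tw q D le_rfl, ← x₁'_mul_x0]
      linear_combination (x 0 ^ d * x 0 ^ D) * hcross
    have hpq := Φ_inj hFpoly
    -- now express y as a sum of elements of the target subring
    have hdenom : (x 0 ^ a * x 1 ^ b * x 2 ^ c) ≠ 0 :=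
      mul_ne_zero (mul_ne_zero (pow_ne_zero _ (x_ne_zero 0)) (pow_ne_zero _ (x_ne_zero 1)))
        (pow_ne_zero _ (x_ne_zero 2))
    have hy2 : y = Φ (x 0) p * (x 0 ^ a * x 1 ^ b * x 2 ^ c)⁻¹ := by
      rw [← h1]
      field_simp
      rw [eq_div_iff hdenom]; ring
    have hΦp : Φ (x 0) p = ∑ j ∈ p.support, ψ (p.coeff j) * x 0 ^ j := by
      rw [show Φ (x 0) p = Polynomial.eval₂ ψ (x 0) p from rfl, Polynomial.eval₂_eq_sum,
        Polynomial.sum_def]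
    have hysum : y = ∑ j ∈ p.support,
        ψ (p.coeff j) * x 0 ^ j * (x 0 ^ a * x 1 ^ b * x 2 ^ c)⁻¹ := by
      rw [hy2, hΦp, Finset.sum_mul]
    rw [hysum]
    refine Subring.sum_mem _ fun j _ => ?_
    have hmem1 : x 1 ∈ Subring.closure {x 0, x₁', x 1, (x 1)⁻¹, x 2, (x 2)⁻¹} :=
      Subring.subset_closure (Or.inr (Or.inr (Or.inl rfl)))
    have hmem2 : x 2 ∈ Subring.closure {x 0, x₁', x 1, (x 1)⁻¹, x 2, (x 2)⁻¹} :=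
      Subring.subset_closure (Or.inr (Or.inr (Or.inr (Or.inr (Or.inl rfl)))))
    have hmem1i : (x 1)⁻¹ ∈ Subring.closure {x 0, x₁', x 1, (x 1)⁻¹, x 2, (x 2)⁻¹} :=
      Subring.subset_closure (Or.inr (Or.inr (Or.inr (Or.inl rfl))))
    have hmem2i : (x 2)⁻¹ ∈ Subring.closure {x 0, x₁', x 1, (x 1)⁻¹, x 2, (x 2)⁻¹} :=
      Subring.subset_closure (Or.inr (Or.inr (Or.inr (Or.inr (Or.inr rfl)))))
    have hmem0 : x 0 ∈ Subring.closure {x 0, x₁', x 1, (x 1)⁻¹, x 2, (x 2)⁻¹} :=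
      Subring.subset_closure (Or.inl rfl)
    have hmemx₁' : x₁' ∈ Subring.closure {x 0, x₁', x 1, (x 1)⁻¹, x 2, (x 2)⁻¹} :=
      Subring.subset_closure (Or.inr (Or.inl rfl))
    rcases le_or_gt a j with haj | haj
    · have hterm : ψ (p.coeff j) * x 0 ^ j * (x 0 ^ a * x 1 ^ b * x 2 ^ c)⁻¹
          = ψ (p.coeff j) * x 0 ^ (j - a) * ((x 1)⁻¹) ^ b * ((x 2)⁻¹) ^ c := by
        have hsplit : x 0 ^ j = x 0 ^ (j - a) * x 0 ^ a := by
          rw [← pow_add]; congr 1; omega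
        have ha0 : x 0 ^ a * ((x 0)⁻¹) ^ a = 1 := by
          rw [inv_pow]
          exact mul_inv_cancel₀ (pow_ne_zero _ (x_ne_zero 0))
        rw [hsplit]
        simp only [mul_inv, ← inv_pow]
        linear_combination (ψ (p.coeff j) * x 0 ^ (j - a) * ((x 1)⁻¹) ^ b
          * ((x 2)⁻¹) ^ c) * ha0
      rw [hterm]
      exact mul_mem (mul_mem (mul_mem (ψ_mem _ hmem1 hmem2 _)
        (pow_mem hmem0 _)) (pow_mem hmem1i _)) (pow_mem hmem2i _)
    · obtain ⟨r, hr⟩ := key_dvd le_rfl hpq haj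
      have hterm : ψ (p.coeff j) * x 0 ^ j * (x 0 ^ a * x 1 ^ b * x 2 ^ c)⁻¹
          = ψ r * x₁' ^ (a - j) * ((x 1)⁻¹) ^ b * ((x 2)⁻¹) ^ c := by
        have hsplit : x 0 ^ a = x 0 ^ (a - j) * x 0 ^ j := by
          rw [← pow_add]; congr 1; omega
        have hj0 : x 0 ^ j * ((x 0)⁻¹) ^ j = 1 := by
          rw [inv_pow]
          exact mul_inv_cancel₀ (pow_ne_zero _ (x_ne_zero 0))
        rw [hr, map_mul, map_pow, ψ_mS, x₁', div_pow, hsplit]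
        simp only [mul_inv, div_eq_mul_inv, ← inv_pow]
        linear_combination (ψ r * (x 1 + x 2) ^ (a - j) * ((x 0)⁻¹) ^ (a - j)
          * ((x 1)⁻¹) ^ b * ((x 2)⁻¹) ^ c) * hj0
      rw [hterm]
      exact mul_mem (mul_mem (mul_mem (ψ_mem _ hmem1 hmem2 _)
        (pow_mem hmemx₁' _)) (pow_mem hmem1i _)) (pow_mem hmem2i _)
  · -- easy direction
    rw [Subring.closure_le]
    intro z hz
    rw [SetLike.mem_coe, Subring.mem_inf]
    simp only [Set.mem_insert_iff, Set.mem_singleton_iff] at hz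
    have hg1 : ∀ w ∈ ({x 0, (x 0)⁻¹, x 1, (x 1)⁻¹, x 2, (x 2)⁻¹} : Set F),
        w ∈ Subring.closure {x 0, (x 0)⁻¹, x 1, (x 1)⁻¹, x 2, (x 2)⁻¹} :=
      fun w hw => Subring.subset_closure hw
    have hg2 : ∀ w ∈ ({x₁', x₁'⁻¹, x 1, (x 1)⁻¹, x 2, (x 2)⁻¹} : Set F),
        w ∈ Subring.closure {x₁', x₁'⁻¹, x 1, (x 1)⁻¹, x 2, (x 2)⁻¹} :=
      fun w hw => Subring.subset_closure hw
    rcases hz with rfl | rfl | rfl | rfl | rfl | rfl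
    · constructor
      · exact hg1 _ (Or.inl rfl)
      · have hx0 : x 0 = (x 1 + x 2) * x₁'⁻¹ := by
          rw [← x₁'_mul_x0]
          linear_combination (-(x 0)) * (mul_inv_cancel₀ x₁'_ne_zero)
        rw [hx0]
        exact mul_mem (add_mem (hg2 _ (Or.inr (Or.inr (Or.inl rfl))))
          (hg2 _ (Or.inr (Or.inr (Or.inr (Or.inr (Or.inl rfl)))))))
          (hg2 _ (Or.inr (Or.inl rfl)))
    · constructor
      · have hx1' : x₁' = (x 1 + x 2) * (x 0)⁻¹ := by rw [x₁', div_eq_mul_inv]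
        rw [hx1']
        exact mul_mem (add_mem (hg1 _ (Or.inr (Or.inr (Or.inl rfl))))
          (hg1 _ (Or.inr (Or.inr (Or.inr (Or.inr (Or.inl rfl)))))))
          (hg1 _ (Or.inr (Or.inl rfl)))
      · exact hg2 _ (Or.inl rfl)
    · exact ⟨hg1 _ (Or.inr (Or.inr (Or.inl rfl))), hg2 _ (Or.inr (Or.inr (Or.inl rfl)))⟩
    · exact ⟨hg1 _ (Or.inr (Or.inr (Or.inr (Or.inl rfl)))),
        hg2 _ (Or.inr (Or.inr (Or.inr (Or.inl rfl))))⟩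
    · exact ⟨hg1 _ (Or.inr (Or.inr (Or.inr (Or.inr (Or.inl rfl))))),
        hg2 _ (Or.inr (Or.inr (Or.inr (Or.inr (Or.inl rfl)))))⟩
    · exact ⟨hg1 _ (Or.inr (Or.inr (Or.inr (Or.inr (Or.inr rfl))))),
        hg2 _ (Or.inr (Or.inr (Or.inr (Or.inr (Or.inr rfl)))))⟩

end
end

section
/- Let F = ℚ(x₁, x₂, x₃) and set x₁' := (x₂ + x₃)/x₁. Then the family of localized cluster monomials {x₁^a · x₂^b · x₃^c : a ∈ ℕ, b, c ∈ ℤ} ∪ {(x₁')^a · x₂^b · x₃^c : a ∈ ℕ, a ≥ 1, b, c ∈ ℤ} is a ℤ-basis of the subring ℤ[x₁, x₁', x₂^{±1}, x₃^{±1}] of F. (This family is the classical triangular basis of the cluster algebra of the SL₃ example.) -/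
/- The SL₃ example: F = ℚ(x₁, x₂, x₃), x₁' = (x₂ + x₃)/x₁.
   The localized cluster monomials
   {x₁^a x₂^b x₃^c : a ∈ ℕ, b, c ∈ ℤ} ∪ {(x₁')^a x₂^b x₃^c : a ≥ 1, b, c ∈ ℤ}
   form a ℤ-basis of the localized cluster algebra ℤ[x₁, x₁', x₂^{±1}, x₃^{±1}]. -/

noncomputable section

/-- Index set for the localized cluster monomials: `inl (a, b, c)` encodes
`x₁^a x₂^b x₃^c` with `a ∈ ℕ`; `inr (a, b, c)` encodes `(x₁')^(a+1) x₂^b x₃^c`,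
so that the exponent `a + 1` of `x₁'` ranges over the integers `≥ 1`. -/
def clusterMonomial : (ℕ × ℤ × ℤ) ⊕ (ℕ × ℤ × ℤ) → F
  | .inl (a, b, c) => x 0 ^ a * x 1 ^ b * x 2 ^ c
  | .inr (a, b, c) => x₁' ^ (a + 1) * x 1 ^ b * x 2 ^ c


open MvPolynomial

abbrev PP : Type := MvPolynomial (Fin 3) ℚ

lemma alg_inj : Function.Injective (algebraMap PP F) := IsFractionRing.injective PP F

lemma x_ne0 (i : Fin 3) : x i ≠ 0 := by
  simpa [x] using (map_ne_zero_iff _ alg_inj).mpr (MvPolynomial.X_ne_zero (R := ℚ) i)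

def s3 (u v w : ℕ) : Fin 3 →₀ ℕ := Finsupp.single 0 u + Finsupp.single 1 v + Finsupp.single 2 w

lemma s3_eq_iff {u v w u' v' w' : ℕ} : s3 u v w = s3 u' v' w' ↔ u = u' ∧ v = v' ∧ w = w' := by
  constructor
  · intro h
    have h0 := DFunLike.congr_fun h 0
    have h1 := DFunLike.congr_fun h 1
    have h2 := DFunLike.congr_fun h 2
    simp [s3, Finsupp.single_apply] at h0 h1 h2
    exact ⟨h0, h1, h2⟩
  · rintro ⟨rfl, rfl, rfl⟩; rfl

lemma algMono (u v w : ℕ) : algebraMap PP F (monomial (s3 u v w) 1) = x 0 ^ u * x 1 ^ v * x 2 ^ w := by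
  have h : (monomial (s3 u v w) (1:ℚ)) = X 0 ^ u * X 1 ^ v * X 2 ^ w := by
    rw [X_pow_eq_monomial, X_pow_eq_monomial, X_pow_eq_monomial, monomial_mul, monomial_mul]
    simp [s3]
  rw [h]; simp [x]

lemma alg_smul (r : ℚ) (p : PP) : algebraMap PP F (r • p) = r • (algebraMap PP F p) := by
  rw [MvPolynomial.smul_eq_C_mul, map_mul,
    ← IsScalarTower.algebraMap_smul PP r (algebraMap PP F p), Algebra.smul_def,
    MvPolynomial.algebraMap_eq]

lemma zpow_mul_pow {y : F} (hy : y ≠ 0) (d : ℤ) (N : ℕ) (h : 0 ≤ d + N) :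
    y ^ d * y ^ N = y ^ ((d + N).toNat) := by
  rw [← zpow_natCast y N, ← zpow_add₀ hy, ← zpow_natCast]
  congr 1; omega

def lm (d : ℤ × ℤ × ℤ) : F := x 0 ^ d.1 * x 1 ^ d.2.1 * x 2 ^ d.2.2

lemma lm_indep : LinearIndependent ℚ lm := by
  rw [linearIndependent_iff]
  intro l hl
  classical
  set N : ℕ := ∑ d ∈ l.support, ((-d.1).toNat + (-d.2.1).toNat + (-d.2.2).toNat) with hN
  have hbound : ∀ d ∈ l.support, 0 ≤ d.1 + N ∧ 0 ≤ d.2.1 + N ∧ 0 ≤ d.2.2 + N := by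
    intro d hd
    have h1 : (-d.1).toNat + (-d.2.1).toNat + (-d.2.2).toNat ≤ N :=
      Finset.single_le_sum
        (f := fun d : ℤ × ℤ × ℤ => (-d.1).toNat + (-d.2.1).toNat + (-d.2.2).toNat)
        (fun _ _ => Nat.zero_le _) hd
    omega
  set e : ℤ × ℤ × ℤ → (Fin 3 →₀ ℕ) :=
    fun d => s3 (d.1 + N).toNat (d.2.1 + N).toNat (d.2.2 + N).toNat with he
  set u : F := x 0 ^ N * x 1 ^ N * x 2 ^ N with hu
  have key : ∀ d ∈ l.support, lm d * u = algebraMap PP F (monomial (e d) 1) := by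
    intro d hd
    obtain ⟨h1, h2, h3⟩ := hbound d hd
    rw [algMono, lm, hu]
    rw [← zpow_mul_pow (x_ne0 0) _ _ h1, ← zpow_mul_pow (x_ne0 1) _ _ h2,
      ← zpow_mul_pow (x_ne0 2) _ _ h3]
    ring
  have h2 : algebraMap PP F (l.sum fun d r => r • monomial (e d) 1) = 0 := by
    have h := congrArg (· * u) hl
    simp only [zero_mul] at h
    rw [Finsupp.linearCombination_apply, Finsupp.sum_mul] at h
    rw [map_finsuppSum, ← h]
    apply Finsupp.sum_congr
    intro d hd
    rw [alg_smul, ← key d hd, smul_mul_assoc]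
  have h3 : (l.sum fun d r => r • monomial (e d) (1:ℚ)) = 0 := by
    apply alg_inj; rw [h2, map_zero]
  ext d
  rw [Finsupp.coe_zero, Pi.zero_apply]
  by_cases hd : d ∈ l.support
  swap
  · exact Finsupp.notMem_support_iff.mp hd
  have hc := congrArg (coeff (e d)) h3
  rw [Finsupp.sum, coeff_sum, coeff_zero] at hc
  have hsum : ∑ d' ∈ l.support, coeff (e d) (l d' • monomial (e d') (1:ℚ)) =
      coeff (e d) (l d • monomial (e d) (1:ℚ)) := by
    apply Finset.sum_eq_single_of_mem d hd
    intro d' hd' hne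
    rw [coeff_smul, coeff_monomial]
    have hne' : e d' ≠ e d := by
      intro hEq
      obtain ⟨q1, q2, q3⟩ := hbound d hd
      obtain ⟨p1, p2, p3⟩ := hbound d' hd'
      rw [he] at hEq
      rw [s3_eq_iff] at hEq
      apply hne
      obtain ⟨e1, e2, e3⟩ := hEq
      have : d'.1 = d.1 ∧ d'.2.1 = d.2.1 ∧ d'.2.2 = d.2.2 := by omega
      obtain ⟨a1, a2, a3⟩ := this
      exact Prod.ext a1 (Prod.ext a2 a3)
    simp [hne']
  rw [hsum, coeff_smul, coeff_monomial, if_pos rfl] at hc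
  simpa using hc

/-- the monomial as a product of powers of the `X i` -/
def XM (u v w : ℕ) : PP := X 0 ^ u * X 1 ^ v * X 2 ^ w

lemma XM_eq_monomial (u v w : ℕ) : XM u v w = monomial (s3 u v w) 1 := by
  rw [XM, X_pow_eq_monomial, X_pow_eq_monomial, X_pow_eq_monomial, monomial_mul, monomial_mul]
  simp [s3]

lemma coeff_XM (μ : Fin 3 →₀ ℕ) (u v w : ℕ) :
    coeff μ (XM u v w) = if s3 u v w = μ then 1 else 0 := by
  rw [XM_eq_monomial, coeff_monomial]

lemma x1'_mul_x0 : x₁' * x 0 = x 1 + x 2 := div_mul_cancel₀ _ (x_ne0 0)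

lemma g_indep : LinearIndependent ℚ (fun p : ℕ × ℤ × ℤ => x₁' ^ (p.1 + 1) * x 1 ^ p.2.1 * x 2 ^ p.2.2) := by
  rw [linearIndependent_iff]
  intro l hl
  classical
  by_contra hne
  have hsupp : l.support.Nonempty := Finsupp.support_nonempty_iff.mpr hne
  set N : ℕ := ∑ p ∈ l.support, (p.1 + 1) with hN
  have hNb : ∀ p ∈ l.support, p.1 + 1 ≤ N := fun p hp =>
    Finset.single_le_sum (f := fun p : ℕ × ℤ × ℤ => p.1 + 1) (fun _ _ => Nat.zero_le _) hp
  set M : ℕ := ∑ p ∈ l.support, ((-p.2.1).toNat + (-p.2.2).toNat) with hM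
  have hMb : ∀ p ∈ l.support, 0 ≤ p.2.1 + M ∧ 0 ≤ p.2.2 + M := by
    intro p hp
    have h1 : (-p.2.1).toNat + (-p.2.2).toNat ≤ M :=
      Finset.single_le_sum (f := fun p : ℕ × ℤ × ℤ => (-p.2.1).toNat + (-p.2.2).toNat)
        (fun _ _ => Nat.zero_le _) hp
    omega
  set u : F := x 0 ^ N * x 1 ^ M * x 2 ^ M with hu
  set Q : ℕ × ℤ × ℤ → PP := fun p =>
    (X 1 + X 2) ^ (p.1 + 1) * X 0 ^ (N - (p.1 + 1)) * X 1 ^ ((p.2.1 + M).toNat)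
      * X 2 ^ ((p.2.2 + M).toNat) with hQdef
  have key : ∀ p ∈ l.support,
      (x₁' ^ (p.1 + 1) * x 1 ^ p.2.1 * x 2 ^ p.2.2) * u = algebraMap PP F (Q p) := by
    intro p hp
    obtain ⟨h1, h2⟩ := hMb p hp
    have hx0 : x₁' ^ (p.1 + 1) * x 0 ^ N = (x 1 + x 2) ^ (p.1 + 1) * x 0 ^ (N - (p.1 + 1)) := by
      have hsplit : x 0 ^ N = x 0 ^ (p.1 + 1) * x 0 ^ (N - (p.1 + 1)) := by
        rw [← pow_add]; congr 1; have := hNb p hp; omega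
      rw [hsplit, ← mul_assoc, ← mul_pow, x1'_mul_x0]
    have expand : algebraMap PP F (Q p) =
        (x 1 + x 2) ^ (p.1 + 1) * x 0 ^ (N - (p.1 + 1)) * x 1 ^ ((p.2.1 + M).toNat)
          * x 2 ^ ((p.2.2 + M).toNat) := by
      simp only [hQdef, map_mul, map_pow, map_add]; rfl
    rw [expand, ← hx0, ← zpow_mul_pow (x_ne0 1) _ _ h1, ← zpow_mul_pow (x_ne0 2) _ _ h2, hu]
    ring
  have h2 : algebraMap PP F (l.sum fun p r => r • Q p) = 0 := by
    have h := congrArg (· * u) hl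
    simp only [zero_mul] at h
    rw [Finsupp.linearCombination_apply, Finsupp.sum_mul] at h
    rw [map_finsuppSum, ← h]
    apply Finsupp.sum_congr
    intro p hp
    rw [alg_smul, ← key p hp, smul_mul_assoc]
  have h3 : (l.sum fun p r => r • Q p) = 0 := by
    apply alg_inj; rw [h2, map_zero]
  -- expansion of Q p as a sum of monomials
  have hQ : ∀ p : ℕ × ℤ × ℤ, Q p = ∑ k ∈ Finset.range (p.1 + 2),
      ((p.1 + 1).choose k : ℚ) •
        XM (N - (p.1 + 1)) ((p.2.1 + M).toNat + k) ((p.2.2 + M).toNat + (p.1 + 1 - k)) := by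
    intro p
    rw [hQdef]
    simp only [add_pow]
    rw [Finset.sum_mul, Finset.sum_mul, Finset.sum_mul]
    apply Finset.sum_congr rfl
    intro k hk
    rw [smul_eq_C_mul, XM,
      show (((p.1 + 1).choose k : PP)) = C (((p.1 + 1).choose k : ℚ)) by simp,
      pow_add, pow_add]
    ring
  -- choose the extraction monomial
  obtain ⟨p₀, hp₀⟩ := hsupp
  set T : Finset (ℕ × ℤ × ℤ) := l.support.filter (fun p => p.1 = p₀.1) with hT
  have hTne : T.Nonempty := ⟨p₀, by simp [hT, hp₀]⟩
  obtain ⟨ps, hpsT, hmin⟩ := T.exists_min_image (fun p => p.2.2) hTne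
  have hps_supp : ps ∈ l.support := (Finset.mem_filter.mp hpsT).1
  set μ : Fin 3 →₀ ℕ :=
    s3 (N - (ps.1 + 1)) ((ps.2.1 + M).toNat + (ps.1 + 1)) ((ps.2.2 + M).toNat) with hμ
  have hQcoeff : ∀ p ∈ l.support, coeff μ (Q p) = if p = ps then 1 else 0 := by
    intro p hp
    obtain ⟨hb1, hb2⟩ := hMb p hp
    obtain ⟨hs1, hs2⟩ := hMb ps hps_supp
    have hn1 := hNb p hp
    have hn2 := hNb ps hps_supp
    rw [hQ p, coeff_sum]
    simp only [coeff_smul, coeff_XM, hμ]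
    by_cases hpps : p = ps
    · subst hpps
      rw [if_pos rfl]
      rw [Finset.sum_eq_single_of_mem (p.1 + 1) (by simp)]
      · rw [if_pos (by rw [Nat.sub_self, add_zero])]
        simp
      · intro k hk hkne
        have hne' : s3 (N - (p.1 + 1)) ((p.2.1 + M).toNat + k)
              ((p.2.2 + M).toNat + (p.1 + 1 - k)) ≠
            s3 (N - (p.1 + 1)) ((p.2.1 + M).toNat + (p.1 + 1)) ((p.2.2 + M).toNat) := by
          intro hEq
          obtain ⟨e1, e2, e3⟩ := s3_eq_iff.mp hEq
          have hk' : k < p.1 + 2 := Finset.mem_range.mp hk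
          omega
        rw [if_neg hne']; simp
    · rw [if_neg hpps]
      apply Finset.sum_eq_zero
      intro k hk
      have hk' : k < p.1 + 2 := Finset.mem_range.mp hk
      have hne' : s3 (N - (p.1 + 1)) ((p.2.1 + M).toNat + k)
            ((p.2.2 + M).toNat + (p.1 + 1 - k)) ≠
          s3 (N - (ps.1 + 1)) ((ps.2.1 + M).toNat + (ps.1 + 1)) ((ps.2.2 + M).toNat) := by
        intro hEq
        obtain ⟨e1, e2, e3⟩ := s3_eq_iff.mp hEq
        -- from e1 : N - (p.1+1) = N - (ps.1+1) and bounds, p.1 = ps.1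
        have ha : p.1 = ps.1 := by omega
        -- so p ∈ T, and minimality gives ps.2.2 ≤ p.2.2
        have hpT : p ∈ T := by
          rw [hT, Finset.mem_filter]
          exact ⟨hp, by rw [ha, (Finset.mem_filter.mp hpsT).2]⟩
        have hcle : ps.2.2 ≤ p.2.2 := hmin p hpT
        -- e3 : (p.2.2+M).toNat + (p.1+1-k) = (ps.2.2+M).toNat forces k = p.1+1, p.2.2 = ps.2.2
        -- then e2 forces p.2.1 = ps.2.1, contradicting p ≠ ps
        apply hpps
        have : p.1 = ps.1 ∧ p.2.1 = ps.2.1 ∧ p.2.2 = ps.2.2 := by omega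
        exact Prod.ext this.1 (Prod.ext this.2.1 this.2.2)
      rw [if_neg hne']; simp
  -- extract the coefficient in the relation h3
  have hc := congrArg (coeff μ) h3
  rw [Finsupp.sum, coeff_sum, coeff_zero] at hc
  have : ∑ p ∈ l.support, coeff μ (l p • Q p) = l ps := by
    rw [Finset.sum_congr rfl (fun p hp => by rw [coeff_smul, hQcoeff p hp])]
    simp [Finset.sum_ite_eq' l.support ps, hps_supp]
  rw [this] at hc
  exact Finsupp.mem_support_iff.mp hps_supp hc

lemma rat_smul_def (r : ℚ) (z : F) : r • z = algebraMap PP F (C r) * z := by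
  rw [← IsScalarTower.algebraMap_smul PP r z, Algebra.smul_def, MvPolynomial.algebraMap_eq]

lemma inr_mem_span (a : ℕ) (b c : ℤ) :
    x₁' ^ (a + 1) * x 1 ^ b * x 2 ^ c ∈
      Submodule.span ℚ (lm '' {d : ℤ × ℤ × ℤ | d.1 < 0}) := by
  have h0 : x₁' ^ (a + 1) = (x 1 + x 2) ^ (a + 1) * (x 0) ^ (-((a : ℤ) + 1)) := by
    have hc : ((a : ℤ) + 1) = ((a + 1 : ℕ) : ℤ) := by push_cast; ring
    rw [x₁', div_pow, zpow_neg, div_eq_mul_inv, hc, zpow_natCast]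
  have hexp : x₁' ^ (a + 1) * x 1 ^ b * x 2 ^ c =
      ∑ k ∈ Finset.range (a + 2), ((a + 1).choose k : ℚ) •
        lm (-((a : ℤ) + 1), b + (k : ℤ), c + ((a + 1 - k : ℕ) : ℤ)) := by
    rw [h0, add_pow, Finset.sum_mul, Finset.sum_mul, Finset.sum_mul]
    apply Finset.sum_congr rfl
    intro k hk
    rw [rat_smul_def]
    have hcast : algebraMap PP F (C (((a + 1).choose k : ℚ))) = (((a + 1).choose k : ℕ) : F) := by
      simp
    rw [hcast, lm]
    simp only []
    rw [zpow_add₀ (x_ne0 1), zpow_add₀ (x_ne0 2), zpow_natCast, zpow_natCast]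
    ring
  rw [hexp]
  apply Submodule.sum_mem
  intro k hk
  apply Submodule.smul_mem
  apply Submodule.subset_span
  exact ⟨_, by simp; omega, rfl⟩

lemma cm_indep_q : LinearIndependent ℚ clusterMonomial := by
  have hinl : clusterMonomial ∘ Sum.inl =
      fun p : ℕ × ℤ × ℤ => x 0 ^ p.1 * x 1 ^ p.2.1 * x 2 ^ p.2.2 := by
    funext p; rcases p with ⟨a, b, c⟩; rfl
  have hinr : clusterMonomial ∘ Sum.inr =
      fun p : ℕ × ℤ × ℤ => x₁' ^ (p.1 + 1) * x 1 ^ p.2.1 * x 2 ^ p.2.2 := by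
    funext p; rcases p with ⟨a, b, c⟩; rfl
  rw [linearIndependent_sum, hinl, hinr]
  refine ⟨?_, g_indep, ?_⟩
  · have hcomp : (fun p : ℕ × ℤ × ℤ => x 0 ^ p.1 * x 1 ^ p.2.1 * x 2 ^ p.2.2) =
        lm ∘ (fun p : ℕ × ℤ × ℤ => ((p.1 : ℤ), p.2.1, p.2.2)) := by
      funext p
      simp [lm, Function.comp, zpow_natCast]
    rw [hcomp]
    apply lm_indep.comp
    intro p q h
    rcases p with ⟨a, b, c⟩; rcases q with ⟨a', b', c'⟩
    simp_all [Prod.ext_iff]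
  · have hd : Disjoint (Submodule.span ℚ (lm '' {d : ℤ × ℤ × ℤ | 0 ≤ d.1}))
        (Submodule.span ℚ (lm '' {d : ℤ × ℤ × ℤ | d.1 < 0})) := by
      apply lm_indep.disjoint_span_image
      rw [Set.disjoint_left]
      intro d h1 h2
      simp only [Set.mem_setOf_eq] at h1 h2
      omega
    apply hd.mono
    · rw [Submodule.span_le]
      rintro _ ⟨⟨a, b, c⟩, rfl⟩
      apply Submodule.subset_span
      refine ⟨((a : ℤ), b, c), by simp, ?_⟩
      simp [lm, zpow_natCast]
    · rw [Submodule.span_le]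
      rintro _ ⟨⟨a, b, c⟩, rfl⟩
      exact inr_mem_span a b c

lemma cm_indep : LinearIndependent ℤ clusterMonomial := by
  haveI : IsScalarTower ℤ ℚ F := ⟨fun n q z => by
    rw [zsmul_eq_mul, mul_smul]; exact Int.cast_smul_eq_zsmul ℚ n (q • z)⟩
  apply cm_indep_q.restrict_scalars
  intro a b h
  simp only [zsmul_eq_mul, mul_one] at h
  exact_mod_cast h

namespace SpanPart

abbrev MM : Submodule ℤ F := Submodule.span ℤ (Set.range clusterMonomial)

lemma zpow_mem {S : Subring F} {y : F} (hy : y ∈ S) (hy' : y⁻¹ ∈ S) (b : ℤ) : y ^ b ∈ S := by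
  cases b with
  | ofNat n => simpa using pow_mem hy n
  | negSucc n => rw [zpow_negSucc, ← inv_pow]; exact pow_mem hy' _

lemma key_mem (k : ℕ) : ∀ (a : ℕ) (b c : ℤ), x 0 ^ a * x₁' ^ k * x 1 ^ b * x 2 ^ c ∈ MM := by
  induction k with
  | zero =>
    intro a b c
    have h : x 0 ^ a * x₁' ^ 0 * x 1 ^ b * x 2 ^ c = clusterMonomial (.inl (a, b, c)) := by
      show _ = x 0 ^ a * x 1 ^ b * x 2 ^ c
      rw [pow_zero, mul_one]
    rw [h]
    exact Submodule.subset_span ⟨_, rfl⟩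
  | succ k ih =>
    intro a b c
    cases a with
    | zero =>
      have h : x 0 ^ 0 * x₁' ^ (k + 1) * x 1 ^ b * x 2 ^ c = clusterMonomial (.inr (k, b, c)) := by
        show _ = x₁' ^ (k + 1) * x 1 ^ b * x 2 ^ c
        rw [pow_zero, one_mul]
      rw [h]
      exact Submodule.subset_span ⟨_, rfl⟩
    | succ a =>
      have step : x 0 ^ (a + 1) * x₁' ^ (k + 1) * x 1 ^ b * x 2 ^ c
          = x 0 ^ a * x₁' ^ k * x 1 ^ (b + 1) * x 2 ^ c
            + x 0 ^ a * x₁' ^ k * x 1 ^ b * x 2 ^ (c + 1) := by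
        calc x 0 ^ (a + 1) * x₁' ^ (k + 1) * x 1 ^ b * x 2 ^ c
            = (x 0 ^ a * x₁' ^ k * x 1 ^ b * x 2 ^ c) * (x₁' * x 0) := by ring
          _ = (x 0 ^ a * x₁' ^ k * x 1 ^ b * x 2 ^ c) * (x 1 + x 2) := by rw [x1'_mul_x0]
          _ = x 0 ^ a * x₁' ^ k * (x 1 ^ b * x 1) * x 2 ^ c
              + x 0 ^ a * x₁' ^ k * x 1 ^ b * (x 2 ^ c * x 2) := by ring
          _ = x 0 ^ a * x₁' ^ k * x 1 ^ (b + 1) * x 2 ^ c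
              + x 0 ^ a * x₁' ^ k * x 1 ^ b * x 2 ^ (c + 1) := by
                rw [zpow_add_one₀ (x_ne0 1), zpow_add_one₀ (x_ne0 2)]
      rw [step]
      exact add_mem (ih a (b + 1) c) (ih a b (c + 1))

lemma prod_mem : ∀ i j, clusterMonomial i * clusterMonomial j ∈ MM := by
  have hmul10 : ∀ (a a' : ℕ) (b b' c c' : ℤ),
      x 1 ^ b * x 1 ^ b' = x 1 ^ (b + b') ∧ x 2 ^ c * x 2 ^ c' = x 2 ^ (c + c') := by
    intro a a' b b' c c'
    exact ⟨(zpow_add₀ (x_ne0 1) b b').symm, (zpow_add₀ (x_ne0 2) c c').symm⟩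
  rintro (⟨a, b, c⟩ | ⟨a, b, c⟩) (⟨a', b', c'⟩ | ⟨a', b', c'⟩)
  · have h : clusterMonomial (.inl (a, b, c)) * clusterMonomial (.inl (a', b', c'))
        = clusterMonomial (.inl (a + a', b + b', c + c')) := by
      show (x 0 ^ a * x 1 ^ b * x 2 ^ c) * (x 0 ^ a' * x 1 ^ b' * x 2 ^ c')
        = x 0 ^ (a + a') * x 1 ^ (b + b') * x 2 ^ (c + c')
      rw [pow_add, zpow_add₀ (x_ne0 1), zpow_add₀ (x_ne0 2)]
      ring
    rw [h]; exact Submodule.subset_span ⟨_, rfl⟩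
  · have h : clusterMonomial (.inl (a, b, c)) * clusterMonomial (.inr (a', b', c'))
        = x 0 ^ a * x₁' ^ (a' + 1) * x 1 ^ (b + b') * x 2 ^ (c + c') := by
      show (x 0 ^ a * x 1 ^ b * x 2 ^ c) * (x₁' ^ (a' + 1) * x 1 ^ b' * x 2 ^ c') = _
      rw [zpow_add₀ (x_ne0 1), zpow_add₀ (x_ne0 2)]
      ring
    rw [h]; exact key_mem (a' + 1) a (b + b') (c + c')
  · have h : clusterMonomial (.inr (a, b, c)) * clusterMonomial (.inl (a', b', c'))
        = x 0 ^ a' * x₁' ^ (a + 1) * x 1 ^ (b + b') * x 2 ^ (c + c') := by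
      show (x₁' ^ (a + 1) * x 1 ^ b * x 2 ^ c) * (x 0 ^ a' * x 1 ^ b' * x 2 ^ c') = _
      rw [zpow_add₀ (x_ne0 1), zpow_add₀ (x_ne0 2)]
      ring
    rw [h]; exact key_mem (a + 1) a' (b + b') (c + c')
  · have h : clusterMonomial (.inr (a, b, c)) * clusterMonomial (.inr (a', b', c'))
        = clusterMonomial (.inr (a + a' + 1, b + b', c + c')) := by
      show (x₁' ^ (a + 1) * x 1 ^ b * x 2 ^ c) * (x₁' ^ (a' + 1) * x 1 ^ b' * x 2 ^ c')
        = x₁' ^ (a + a' + 1 + 1) * x 1 ^ (b + b') * x 2 ^ (c + c')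
      rw [zpow_add₀ (x_ne0 1), zpow_add₀ (x_ne0 2),
        show a + a' + 1 + 1 = (a + 1) + (a' + 1) by ring, pow_add]
      ring
    rw [h]; exact Submodule.subset_span ⟨_, rfl⟩

lemma mul_mem_MM : ∀ f ∈ MM, ∀ g ∈ MM, f * g ∈ MM := by
  intro f hf
  refine Submodule.span_induction ?_ ?_ ?_ ?_ hf
  · rintro y ⟨i, rfl⟩ g hg
    refine Submodule.span_induction ?_ ?_ ?_ ?_ hg
    · rintro z ⟨j, rfl⟩
      exact prod_mem i j
    · rw [mul_zero]; exact zero_mem _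
    · intro u v _ _ hu hv; rw [mul_add]; exact add_mem hu hv
    · intro r u _ hu; rw [mul_smul_comm]; exact Submodule.smul_mem _ _ hu
  · intro g hg; rw [zero_mul]; exact zero_mem _
  · intro u v _ _ hu hv g hg; rw [add_mul]; exact add_mem (hu g hg) (hv g hg)
  · intro r u _ hu g hg; rw [smul_mul_assoc]; exact Submodule.smul_mem _ _ (hu g hg)

lemma span_eq_closure :
    (MM : Set F) = (Subring.closure {x 0, x₁', x 1, (x 1)⁻¹, x 2, (x 2)⁻¹} : Set F) := by
  have h0 : x 0 ∈ Subring.closure {x 0, x₁', x 1, (x 1)⁻¹, x 2, (x 2)⁻¹} :=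
    Subring.subset_closure (by simp)
  have h1' : x₁' ∈ Subring.closure {x 0, x₁', x 1, (x 1)⁻¹, x 2, (x 2)⁻¹} :=
    Subring.subset_closure (by simp)
  have h1 : x 1 ∈ Subring.closure {x 0, x₁', x 1, (x 1)⁻¹, x 2, (x 2)⁻¹} :=
    Subring.subset_closure (by simp)
  have h1i : (x 1)⁻¹ ∈ Subring.closure {x 0, x₁', x 1, (x 1)⁻¹, x 2, (x 2)⁻¹} :=
    Subring.subset_closure (by simp)
  have h2 : x 2 ∈ Subring.closure {x 0, x₁', x 1, (x 1)⁻¹, x 2, (x 2)⁻¹} :=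
    Subring.subset_closure (by simp)
  have h2i : (x 2)⁻¹ ∈ Subring.closure {x 0, x₁', x 1, (x 1)⁻¹, x 2, (x 2)⁻¹} :=
    Subring.subset_closure (by simp)
  apply Set.Subset.antisymm
  · intro f hf
    rw [SetLike.mem_coe] at hf ⊢
    refine Submodule.span_induction ?_ ?_ ?_ ?_ hf
    · rintro y ⟨i, rfl⟩
      rcases i with ⟨a, b, c⟩ | ⟨a, b, c⟩
      · exact mul_mem (mul_mem (pow_mem h0 a) (zpow_mem h1 h1i b)) (zpow_mem h2 h2i c)
      · exact mul_mem (mul_mem (pow_mem h1' (a + 1)) (zpow_mem h1 h1i b)) (zpow_mem h2 h2i c)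
    · exact zero_mem _
    · intro u v _ _ hu hv; exact add_mem hu hv
    · intro r u _ hu; exact zsmul_mem hu r
  · intro f hf
    rw [SetLike.mem_coe] at hf ⊢
    refine Subring.closure_induction ?_ ?_ ?_ ?_ ?_ ?_ hf
    · intro y hy
      simp only [Set.mem_insert_iff, Set.mem_singleton_iff] at hy
      rcases hy with rfl | rfl | rfl | rfl | rfl | rfl
      · refine Submodule.subset_span ⟨.inl (1, 0, 0), ?_⟩
        show x 0 ^ 1 * x 1 ^ (0 : ℤ) * x 2 ^ (0 : ℤ) = _
        simp
      · refine Submodule.subset_span ⟨.inr (0, 0, 0), ?_⟩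
        show x₁' ^ (0 + 1) * x 1 ^ (0 : ℤ) * x 2 ^ (0 : ℤ) = _
        simp
      · refine Submodule.subset_span ⟨.inl (0, 1, 0), ?_⟩
        show x 0 ^ 0 * x 1 ^ (1 : ℤ) * x 2 ^ (0 : ℤ) = _
        simp
      · refine Submodule.subset_span ⟨.inl (0, -1, 0), ?_⟩
        show x 0 ^ 0 * x 1 ^ (-1 : ℤ) * x 2 ^ (0 : ℤ) = _
        simp
      · refine Submodule.subset_span ⟨.inl (0, 0, 1), ?_⟩
        show x 0 ^ 0 * x 1 ^ (0 : ℤ) * x 2 ^ (1 : ℤ) = _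
        simp
      · refine Submodule.subset_span ⟨.inl (0, 0, -1), ?_⟩
        show x 0 ^ 0 * x 1 ^ (0 : ℤ) * x 2 ^ (-1 : ℤ) = _
        simp
    · exact zero_mem _
    · refine Submodule.subset_span ⟨.inl (0, 0, 0), ?_⟩
      show x 0 ^ 0 * x 1 ^ (0 : ℤ) * x 2 ^ (0 : ℤ) = _
      simp
    · intro u v _ _ hu hv; exact add_mem hu hv
    · intro u _ hu; exact neg_mem hu
    · intro u v _ _ hu hv; exact mul_mem_MM u hu v hv

end SpanPart

theorem cluster_monomials_are_triangular_basis :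
    LinearIndependent ℤ clusterMonomial ∧
    (Submodule.span ℤ (Set.range clusterMonomial) : Set F) =
      (Subring.closure {x 0, x₁', x 1, (x 1)⁻¹, x 2, (x 2)⁻¹} : Set F) :=
  ⟨cm_indep, SpanPart.span_eq_closure⟩

end
end

section
/- Let R = ℤ[v, v^{-1}] with bar involution v ↦ v^{-1} and m := v^{-1}ℤ[v^{-1}]. Let M be an R-module, ψ : M → M an additive map that is bar-semilinear (ψ(r·x) = r̄·ψ(x) for all r ∈ R, x ∈ M), and let (s_g)_{g ∈ G} be an R-linearly independent family in M indexed by a partially ordered set (G, ≺) such that for every g, ψ(s_g) − s_g lies in the R-span of {s_{g'} : g' ≺ g}. Then for each g ∈ G there is at most one element b ∈ M such that ψ(b) = b and b − s_g is a finite sum Σ_{g' ≺ g} c_{g'} s_{g'} with all coefficients c_{g'} ∈ m. (Kazhdan–Lusztig-type uniqueness: the triangular basis with respect to a seed is unique if it exists.) -/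
/- Kazhdan–Lusztig-type uniqueness. R = ℤ[v, v⁻¹], bar involution v ↦ v⁻¹
   (`LaurentPolynomial.invert`), m = v⁻¹ℤ[v⁻¹] = Laurent polynomials all of whose
   exponents are negative. Given an R-module M, a bar-semilinear additive map
   ψ : M → M, and an R-linearly independent family (s_g) indexed by a poset G with
   ψ(s_g) − s_g ∈ span{s_{g'} : g' ≺ g}, for each g there is at most one
   bar-invariant b with b − s_g = Σ_{g' ≺ g} c_{g'} s_{g'}, all c_{g'} ∈ m. -/

theorem triangular_basis_element_unique
    {M : Type*} [AddCommGroup M] [Module (LaurentPolynomial ℤ) M]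
    {G : Type*} [PartialOrder G]
    (ψ : M →+ M)
    (hψ : ∀ (r : LaurentPolynomial ℤ) (m : M),
      ψ (r • m) = (LaurentPolynomial.invert r) • ψ m)
    (s : G → M)
    (hs : LinearIndependent (LaurentPolynomial ℤ) s)
    (htri : ∀ g : G,
      ψ (s g) - s g ∈ Submodule.span (LaurentPolynomial ℤ) (s '' {g' | g' < g}))
    (g : G) (b₁ b₂ : M)
    (hb₁ : ψ b₁ = b₁)
    (hd₁ : ∃ (T : Finset G) (c : G → LaurentPolynomial ℤ),
      (∀ g' ∈ T, g' < g) ∧ (∀ g' ∈ T, ∀ n ∈ (c g').coeff.support, n < 0) ∧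
      b₁ - s g = ∑ g' ∈ T, c g' • s g')
    (hb₂ : ψ b₂ = b₂)
    (hd₂ : ∃ (T : Finset G) (c : G → LaurentPolynomial ℤ),
      (∀ g' ∈ T, g' < g) ∧ (∀ g' ∈ T, ∀ n ∈ (c g').coeff.support, n < 0) ∧
      b₂ - s g = ∑ g' ∈ T, c g' • s g') :
    b₁ = b₂ := by
  classical
  obtain ⟨T₁, c₁, hT₁, hm₁, he₁⟩ := hd₁
  obtain ⟨T₂, c₂, hT₂, hm₂, he₂⟩ := hd₂
  set T : Finset G := T₁ ∪ T₂ with hT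
  set c : G → LaurentPolynomial ℤ := fun g' =>
    (if g' ∈ T₁ then c₁ g' else 0) - (if g' ∈ T₂ then c₂ g' else 0) with hc
  -- the difference d = b₁ - b₂
  have hd : b₁ - b₂ = ∑ g' ∈ T, c g' • s g' := by
    have h1 : ∑ g' ∈ T, (if g' ∈ T₁ then c₁ g' else 0) • s g' = ∑ g' ∈ T₁, c₁ g' • s g' := by
      rw [← Finset.sum_subset (Finset.subset_union_left (s₂ := T₂))
        (fun x _ hx => by simp [hx])]
      exact Finset.sum_congr rfl fun x hx => by simp [hx]
    have h2 : ∑ g' ∈ T, (if g' ∈ T₂ then c₂ g' else 0) • s g' = ∑ g' ∈ T₂, c₂ g' • s g' := by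
      rw [← Finset.sum_subset (Finset.subset_union_right (s₁ := T₁))
        (fun x _ hx => by simp [hx])]
      exact Finset.sum_congr rfl fun x hx => by simp [hx]
    have : b₁ - b₂ = (b₁ - s g) - (b₂ - s g) := by abel
    rw [this, he₁, he₂, ← h1, ← h2, ← Finset.sum_sub_distrib]
    exact Finset.sum_congr rfl fun x _ => by rw [hc, sub_smul]
  -- coefficients have only negative exponents
  have hmc : ∀ g', ∀ n ∈ (c g').coeff.support, n < 0 := by
    intro g' n hn
    simp only [hc, AddMonoidAlgebra.coeff_sub] at hn
    have := Finsupp.support_sub hn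
    rcases Finset.mem_union.1 this with h | h
    · split_ifs at h with h'
      · exact hm₁ g' h' n h
      · simp at h
    · split_ifs at h with h'
      · exact hm₂ g' h' n h
      · simp at h
  -- lower-triangular data for ψ (s g')
  have hl : ∀ g' : G, ∃ l : G →₀ LaurentPolynomial ℤ,
      (∀ x ∈ l.support, x < g') ∧
      Finsupp.linearCombination (LaurentPolynomial ℤ) s l = ψ (s g') - s g' := by
    intro g'
    obtain ⟨l, hl1, hl2⟩ := (Finsupp.mem_span_image_iff_linearCombination _).1 (htri g')
    exact ⟨l, fun x hx => hl1 hx, hl2⟩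
  choose l hlsupp hltot using hl
  -- ψ d = d
  have hinv : ψ (b₁ - b₂) = b₁ - b₂ := by rw [map_sub, hb₁, hb₂]
  -- the linear combination witnessing d - ψ d = 0
  set F : G →₀ LaurentPolynomial ℤ :=
    ∑ g' ∈ T, (Finsupp.single g' (c g' - LaurentPolynomial.invert (c g'))
      - LaurentPolynomial.invert (c g') • l g') with hF
  have hF0 : F = 0 := by
    apply linearIndependent_iff.1 hs
    rw [hF, map_sum]
    have : ∀ g' ∈ T,
        Finsupp.linearCombination (LaurentPolynomial ℤ) s
          (Finsupp.single g' (c g' - LaurentPolynomial.invert (c g'))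
            - LaurentPolynomial.invert (c g') • l g')
        = c g' • s g' - LaurentPolynomial.invert (c g') • ψ (s g') := by
      intro g' _
      rw [map_sub, map_smul, Finsupp.linearCombination_single, hltot, sub_smul, smul_sub]
      abel
    rw [Finset.sum_congr rfl this, Finset.sum_sub_distrib, ← hd]
    have hψd : ψ (b₁ - b₂) = ∑ g' ∈ T, LaurentPolynomial.invert (c g') • ψ (s g') := by
      rw [hd, map_sum]
      exact Finset.sum_congr rfl fun x _ => hψ _ _
    rw [← hψd, hinv, sub_self]
  -- each coefficient c g' vanishes
  have hczero : ∀ g' ∈ T, c g' = 0 := by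
    by_contra h
    push_neg at h
    set S : Finset G := T.filter (fun g' => c g' ≠ 0) with hS
    have hSne : S.Nonempty := by
      obtain ⟨g', hg', hne⟩ := h
      exact ⟨g', Finset.mem_filter.2 ⟨hg', hne⟩⟩
    obtain ⟨g₀, hg₀S, hg₀max⟩ : ∃ a ∈ (S : Set G), ∀ a' ∈ (S : Set G), id a ≤ id a' → id a = id a' := by
      obtain ⟨a, ha, hmax⟩ :=
        Set.Finite.exists_maximalFor id (S : Set G) (S : Set G).toFinite (Finset.coe_nonempty.2 hSne)
      exact ⟨a, ha, fun a' h' hle => le_antisymm hle (hmax h' hle)⟩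
    have hg₀T : g₀ ∈ T := (Finset.mem_filter.1 hg₀S).1
    have hg₀ne : c g₀ ≠ 0 := (Finset.mem_filter.1 hg₀S).2
    -- evaluate F at g₀
    have hFg₀ : F g₀ = c g₀ - LaurentPolynomial.invert (c g₀) := by
      rw [hF, Finsupp.finset_sum_apply]
      rw [Finset.sum_eq_single g₀]
      · have : (l g₀) g₀ = 0 := by
          by_contra hne
          exact lt_irrefl g₀ (hlsupp g₀ g₀ (Finsupp.mem_support_iff.2 hne))
        simp [this]
      · intro g' hg'T hne
        have hsingle : (Finsupp.single g'
            (c g' - LaurentPolynomial.invert (c g'))) g₀ = 0 :=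
          Finsupp.single_eq_of_ne hne.symm
        by_cases hcz : c g' = 0
        · simp [Finsupp.single_eq_of_ne hne.symm, hcz]
        · have hg'S : g' ∈ S := Finset.mem_filter.2 ⟨hg'T, hcz⟩
          have : (l g') g₀ = 0 := by
            by_contra hlz
            have hlt : g₀ < g' := hlsupp g' g₀ (Finsupp.mem_support_iff.2 hlz)
            exact hne ((hg₀max g' hg'S hlt.le).symm) |>.elim
          simp [Finsupp.single_eq_of_ne hne.symm, this]
      · intro habs
        exact absurd hg₀T habs
    rw [hF0] at hFg₀
    have heq : c g₀ = LaurentPolynomial.invert (c g₀) :=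
      sub_eq_zero.1 (by simpa using hFg₀.symm)
    -- negative support + bar-invariance forces zero
    apply hg₀ne
    ext n
    rcases lt_trichotomy n 0 with hn | hn | hn
    · have h1 : (c g₀).coeff n = (c g₀).coeff (-n) := by
        conv_lhs => rw [heq]
        exact LaurentPolynomial.invert_apply (c g₀) n
      have h2 : (c g₀).coeff (-n) = 0 := by
        by_contra habs
        have := hmc g₀ (-n) (Finsupp.mem_support_iff.2 habs)
        omega
      simp [h1, h2]
    · subst hn
      by_contra habs
      have := hmc g₀ 0 (Finsupp.mem_support_iff.2 habs)
      omega
    · by_contra habs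
      have := hmc g₀ n (Finsupp.mem_support_iff.2 habs)
      omega
  have : b₁ - b₂ = 0 := by
    rw [hd]
    exact Finset.sum_eq_zero fun x hx => by rw [hczero x hx, zero_smul]
  exact sub_eq_zero.1 this
end

section
/- Let I be a finite index set with subset I_uf, B̃ : ℤ^{I_uf} → ℤ^I an integer matrix with B̃n = 0, n ∈ ℕ^{I_uf} ⟹ n = 0, and let R be any commutative ring. In the Laurent polynomial ring A = R[X_i^{±1} : i ∈ I], if S ⊆ ℤ^I is a finite set and for each g ∈ S the element z_g ∈ A is g-pointed, then the family (z_g)_{g∈S} is R-linearly independent; in particular, a decomposition of an element of A as an R-linear combination of the z_g is unique. -/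
/- PointedAt elements with distinct degrees are linearly independent.
   A = R[X_i^{±1} : i ∈ I] is realized as the group algebra
   `AddMonoidAlgebra R (I → ℤ)`, so that `X^g` corresponds to the exponent
   vector `g : I → ℤ`; `z g` is the coefficient of `X^g` in `z`, and
   `z.support` is the set of exponent vectors occurring in `z`. -/

/-- `g'` is dominated by `g`: `g' = g + B̃ n` for some `n ∈ ℕ^{I_uf}`. -/
def DominanceLE {I : Type*} (Iuf : Set I) [Fintype Iuf] (B : Matrix I Iuf ℤ)
    (g' g : I → ℤ) : Prop :=
  ∃ n : Iuf → ℤ, (∀ k, 0 ≤ n k) ∧ g' = g + B.mulVec n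

/-- `z` is `g`-pointed: the coefficient of `X^g` in `z` is `1` and every
exponent vector in the support of `z` is dominated by `g`. -/
def PointedAt {I R : Type*} [CommRing R] (Iuf : Set I) [Fintype Iuf]
    (B : Matrix I Iuf ℤ) (g : I → ℤ) (z : AddMonoidAlgebra R (I → ℤ)) : Prop :=
  z.coeff g = 1 ∧ ∀ g' ∈ z.coeff.support, DominanceLE Iuf B g' g

lemma exists_max_rel {α : Type*} (r : α → α → Prop)
    (htrans : ∀ {a b c}, r a b → r b c → r a c) (hirr : ∀ a, ¬ r a a)
    (s : Finset α) (hs : s.Nonempty) : ∃ m ∈ s, ∀ x ∈ s, ¬ r m x := by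
  classical
  induction s using Finset.induction with
  | empty => simp at hs
  | @insert a t _ ih =>
    rcases t.eq_empty_or_nonempty with rfl | ht
    · exact ⟨a, by simp, by simpa using hirr a⟩
    · obtain ⟨m, hm, hmax⟩ := ih ht
      by_cases hma : r m a
      · refine ⟨a, Finset.mem_insert_self _ _, ?_⟩
        intro x hx
        rcases Finset.mem_insert.1 hx with rfl | hx
        · exact hirr x
        · exact fun hax => hmax x hx (htrans hma hax)
      · refine ⟨m, Finset.mem_insert_of_mem hm, ?_⟩
        intro x hx
        rcases Finset.mem_insert.1 hx with rfl | hx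
        · exact hma
        · exact hmax x hx

lemma dominance_trans {I : Type*} (Iuf : Set I) [Fintype Iuf] (B : Matrix I Iuf ℤ)
    {a b c : I → ℤ} (h1 : DominanceLE Iuf B a b) (h2 : DominanceLE Iuf B b c) :
    DominanceLE Iuf B a c := by
  obtain ⟨n, hn, rfl⟩ := h1
  obtain ⟨m, hm, rfl⟩ := h2
  exact ⟨m + n, fun k => add_nonneg (hm k) (hn k), by rw [Matrix.mulVec_add]; abel⟩

lemma dominance_antisymm {I : Type*} (Iuf : Set I) [Fintype Iuf] (B : Matrix I Iuf ℤ)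
    (hB : ∀ n : Iuf → ℤ, (∀ k, 0 ≤ n k) → B.mulVec n = 0 → n = 0)
    {g g' : I → ℤ} (h1 : DominanceLE Iuf B g' g) (h2 : DominanceLE Iuf B g g') :
    g' = g := by
  obtain ⟨n, hn, hgn⟩ := h1
  obtain ⟨m, hm, hgm⟩ := h2
  have hsum : B.mulVec (n + m) = 0 := by
    have h : g = g + (B.mulVec n + B.mulVec m) := by
      conv_lhs => rw [hgm, hgn]
      abel
    have : B.mulVec n + B.mulVec m = 0 := by
      have := (left_eq_add).1 h
      exact this
    rw [Matrix.mulVec_add]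
    exact this
  have hnm := hB (n + m) (fun k => add_nonneg (hn k) (hm k)) hsum
  have hn0 : n = 0 := by
    funext k
    have h1 := congrFun hnm k
    have h2 := hn k
    have h3 := hm k
    simp only [Pi.add_apply, Pi.zero_apply] at h1 ⊢
    linarith
  rw [hgn, hn0, Matrix.mulVec_zero, add_zero]

theorem pointed_family_linearly_independent
    {I : Type*} [Fintype I] (Iuf : Set I) [Fintype Iuf]
    (B : Matrix I Iuf ℤ)
    (hB : ∀ n : Iuf → ℤ, (∀ k, 0 ≤ n k) → B.mulVec n = 0 → n = 0)
    (R : Type*) [CommRing R]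
    (S : Finset (I → ℤ)) (z : (I → ℤ) → AddMonoidAlgebra R (I → ℤ))
    (hz : ∀ g ∈ S, PointedAt Iuf B g (z g)) :
    LinearIndependent R (fun g : S => z g) := by
  classical
  rw [Fintype.linearIndependent_iff]
  intro c hc
  by_contra hne
  push_neg at hne
  obtain ⟨i0, hi0⟩ := hne
  set T : Finset S := Finset.univ.filter (fun i => c i ≠ 0) with hT
  have hTne : T.Nonempty := ⟨i0, by simp [hT, hi0]⟩
  set r : S → S → Prop :=
    fun i j => (i : I → ℤ) ≠ (j : I → ℤ) ∧ DominanceLE Iuf B i j with hr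
  have htrans : ∀ {a b d : S}, r a b → r b d → r a d := by
    intro a b d hab hbd
    refine ⟨?_, dominance_trans Iuf B hab.2 hbd.2⟩
    intro had
    apply hab.1
    have : (b : I → ℤ) = (a : I → ℤ) :=
      dominance_antisymm Iuf B hB (had ▸ hbd.2) hab.2
    exact this.symm
  have hirr : ∀ a, ¬ r a a := fun a h => h.1 rfl
  obtain ⟨m, hmT, hmax⟩ := exists_max_rel r htrans hirr T hTne
  have hcm : c m ≠ 0 := by simpa [hT] using hmT
  have h0 : (∑ i : S, c i • z i).coeff (m : I → ℤ) = 0 := by rw [hc]; rfl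
  rw [AddMonoidAlgebra.coeff_sum, Finset.sum_apply'] at h0
  have hsum : ∑ i : S, (c i • z (i : I → ℤ)).coeff (m : I → ℤ) = c m := by
    rw [Finset.sum_eq_single_of_mem m (Finset.mem_univ m)]
    · rw [AddMonoidAlgebra.coeff_smul_apply, (hz m m.2).1, smul_eq_mul, mul_one]
    · intro i _ hne'
      rw [AddMonoidAlgebra.coeff_smul_apply, smul_eq_mul]
      by_cases hci : c i = 0
      · rw [hci, zero_mul]
      · have hiT : i ∈ T := by simp [hT, hci]
        have hzim : (z (i : I → ℤ)).coeff (m : I → ℤ) = 0 := by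
          by_contra hzi
          have hmem : (m : I → ℤ) ∈ (z (i : I → ℤ)).coeff.support :=
            Finsupp.mem_support_iff.2 hzi
          have hdom := (hz i i.2).2 _ hmem
          exact hmax i hiT ⟨fun h => hne' (Subtype.ext h.symm), hdom⟩
        rw [hzim, mul_zero]
  rw [hsum] at h0
  exact hcm h0
end
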